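/- arXiv:1910.12986 — 4 statements merged into one kernel-verified Lean document; each statement's English description precedes it below -/
import Mathlib

section
/- Let A be a complete discrete valuation ring with uniformizer-like element t ∈ m_A nonzero, let Γ be a profinite group, M a finitely generated A-module with continuous A-linear Γ-action, and Y a finitely generated A-submodule of the continuous cohomology group H^i(Γ, M). Then the quotient H^i(Γ, M)/Y contains no nontrivial t-divisible submodule. -/
/-!
Take `x = t x₁ = t² x₂ = ⋯` in a `t`-divisible submodule of `H^i(Γ, M) / Y` and lift the `xₙ` to
continuous cocycles `zₙ`. Then `zₙ - t zₙ₊₁ ∈ D := B + Y₁`, where `B` are the coboundaries and `Y₁`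
is spanned by finitely many cocycles lifting generators of `Y`, and telescoping gives
`z₀ = tᴺ z_N + ∑_{n<N} tⁿ (zₙ - t zₙ₊₁)`. The series converges `t`-adically to an element of `D`:
`A` and `M` are `t`-adically complete, and a `t`-adically uniform limit of continuous cochains is
continuous. So `z₀` differs from an element of `D` by something in `⋂ tᴺ C = 0`, where `C` is the
module of all cochains, i.e. `x = 0`.
-/

section ContinuousCohomology

variable (A : Type) [CommRing A] (Γ : Type) [Group Γ] [TopologicalSpace Γ]
  (M : Type) [AddCommGroup M] [Module A M] [TopologicalSpace M] [ContinuousAdd M]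
  [ContinuousConstSMul A M] [DistribMulAction Γ M] [SMulCommClass Γ A M]

/-- The inhomogeneous cochain differential on (not necessarily continuous) cochains,
as an `A`-linear map. -/
noncomputable def cochainD (n : ℕ) : ((Fin n → Γ) → M) →ₗ[A] ((Fin (n + 1) → Γ) → M) :=
  LinearMap.pi fun g =>
    (DistribMulAction.toLinearMap A M (g 0)).comp
        (LinearMap.proj fun i : Fin n => g i.succ)
      + ∑ j : Fin n, ((-1 : ℤ) ^ ((j : ℕ) + 1)) •
          LinearMap.proj (R := A) (φ := fun _ : Fin n → Γ => M)
            (fun i : Fin n =>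
              if (i : ℕ) < (j : ℕ) then g i.castSucc
              else if i = j then g i.castSucc * g i.succ else g i.succ)
      + ((-1 : ℤ) ^ (n + 1)) •
          LinearMap.proj (R := A) (φ := fun _ : Fin n → Γ => M)
            (fun i : Fin n => g i.castSucc)

/-- The submodule of continuous cochains. -/
def contCochains (n : ℕ) : Submodule A ((Fin n → Γ) → M) where
  carrier := {f | Continuous f}
  add_mem' := fun hf hg => hf.add hg
  zero_mem' := continuous_const
  smul_mem' := fun a _ hf => hf.const_smul a

/-- Continuous cocycles. -/
noncomputable def contCocycles (n : ℕ) : Submodule A ((Fin n → Γ) → M) :=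
  contCochains A Γ M n ⊓ LinearMap.ker (cochainD A Γ M n)

/-- Coboundaries of continuous cochains. -/
noncomputable def contCoboundaries : (n : ℕ) → Submodule A ((Fin n → Γ) → M)
  | 0 => ⊥
  | (n + 1) => Submodule.map (cochainD A Γ M n) (contCochains A Γ M n)

/-- Continuous (cochain) group cohomology `H^n(Γ, M)`, an `A`-module. -/
noncomputable abbrev ContinuousCohomology (n : ℕ) :=
  contCocycles A Γ M n ⧸
    (Submodule.comap (contCocycles A Γ M n).subtype (contCoboundaries A Γ M n))

end ContinuousCohomology

open Finset

section AdicSeries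

variable {A : Type*} [CommRing A] {C : Type*} [AddCommGroup C] [Module A C]

theorem mem_span_singleton_pow_smul_top_iff {t : A} {n : ℕ} {x : C} :
    x ∈ (Ideal.span {t} ^ n • ⊤ : Submodule A C) ↔ ∃ y, x = t ^ n • y := by
  rw [Ideal.span_singleton_pow, Submodule.ideal_span_singleton_smul,
    Submodule.mem_smul_pointwise_iff_exists]
  simp [eq_comm]

theorem sum_range_pow_smul_sub_smul_succ (t : A) (z : ℕ → C) (N : ℕ) :
    ∑ n ∈ range N, t ^ n • (z n - t • z (n + 1)) = z 0 - t ^ N • z N := by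
  simpa [smul_sub, smul_smul, ← pow_succ] using
    Finset.sum_range_sub' (fun n => t ^ n • z n) N

theorem sum_range_add_sub_sum_range_pow_smul (t : A) (β : ℕ → C) (N K : ℕ) :
    ∑ n ∈ range (N + K), t ^ n • β n - ∑ n ∈ range N, t ^ n • β n =
      t ^ N • ∑ k ∈ range K, t ^ k • β (N + k) := by
  simp [Finset.sum_range_add_sub_sum_range, Finset.smul_sum, smul_smul, pow_add]

variable (t : A)

def Submodule.HasAdicSeriesLimits (D : Submodule A C) : Prop :=
  ∀ β : ℕ → C, (∀ n, β n ∈ D) →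
    ∃ d ∈ D, ∀ N, ∃ y, d - ∑ n ∈ range N, t ^ n • β n = t ^ N • y

theorem Submodule.hasAdicSeriesLimits_bot : (⊥ : Submodule A C).HasAdicSeriesLimits t := by
  intro β hβ
  refine ⟨0, zero_mem _, fun N => ⟨0, ?_⟩⟩
  simp [(Submodule.mem_bot A).mp (hβ _)]

variable {t}

theorem Submodule.HasAdicSeriesLimits.map {D : Submodule A C} (hD : D.HasAdicSeriesLimits t)
    {C' : Type*} [AddCommGroup C'] [Module A C'] (φ : C →ₗ[A] C') :
    (D.map φ).HasAdicSeriesLimits t := by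
  intro β hβ
  choose p hpD hp using hβ
  obtain ⟨d, hdD, hd⟩ := hD p hpD
  refine ⟨φ d, mem_map_of_mem hdD, fun N => ?_⟩
  obtain ⟨y, hy⟩ := hd N
  refine ⟨φ y, ?_⟩
  simp only [← hp, ← map_smul, ← map_sum, ← map_sub, hy]

theorem Submodule.HasAdicSeriesLimits.sup {D E : Submodule A C} (hD : D.HasAdicSeriesLimits t)
    (hE : E.HasAdicSeriesLimits t) : (D ⊔ E).HasAdicSeriesLimits t := by
  intro β hβ
  choose δ hδ ε hε hδε using fun n => Submodule.mem_sup.mp (hβ n)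
  obtain ⟨d, hdD, hd⟩ := hD δ hδ
  obtain ⟨e, heE, he⟩ := hE ε hε
  refine ⟨d + e, add_mem_sup hdD heE, fun N => ?_⟩
  obtain ⟨y, hy⟩ := hd N
  obtain ⟨y', hy'⟩ := he N
  refine ⟨y + y', ?_⟩
  simp only [← hδε, smul_add, Finset.sum_add_distrib, ← hy, ← hy']
  abel

theorem Submodule.HasAdicSeriesLimits.pi_top (h : (⊤ : Submodule A C).HasAdicSeriesLimits t)
    (ι : Type*) : (⊤ : Submodule A (ι → C)).HasAdicSeriesLimits t := by
  intro β _
  choose d _ y hy using fun i => h (fun n => β n i) fun _ => trivial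
  exact ⟨d, trivial, fun N => ⟨fun i => y i N, funext fun i => by simpa using hy i N⟩⟩

theorem Submodule.HasAdicSeriesLimits.of_fg (hA : (⊤ : Submodule A A).HasAdicSeriesLimits t)
    {D : Submodule A C} (hD : D.FG) : D.HasAdicSeriesLimits t := by
  obtain ⟨m, f, rfl⟩ := (Submodule.fg_iff_exists_fin_linearMap A C).mp hD
  rw [LinearMap.range_eq_map]
  exact (hA.pi_top (Fin m)).map f

theorem hasAdicSeriesLimits_top_of_isPrecomplete {I : Ideal A} [IsPrecomplete I C] (ht : t ∈ I)
    {s : ℕ} (hs : I ^ s ≤ Ideal.span {t}) : (⊤ : Submodule A C).HasAdicSeriesLimits t := by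
  intro β _
  set S : ℕ → C := fun N => ∑ n ∈ range N, t ^ n • β n
  have hcauchy {m n : ℕ} (hmn : m ≤ n) : S m ≡ S n [SMOD (I ^ m • ⊤ : Submodule A C)] := by
    obtain ⟨K, rfl⟩ := Nat.exists_eq_add_of_le hmn
    rw [SModEq.comm, SModEq.sub_mem, sum_range_add_sub_sum_range_pow_smul]
    exact Submodule.smul_mem_smul (Ideal.pow_mem_pow ht m) trivial
  obtain ⟨L, hL⟩ := IsPrecomplete.prec ‹_› hcauchy
  refine ⟨L, trivial, fun N => ?_⟩
  have hfar : L - S (s * N + N) ∈ (Ideal.span {t} ^ N • ⊤ : Submodule A C) := by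
    have := SModEq.sub_mem.mp (hL (s * N + N)).symm
    refine Submodule.smul_mono_left ?_ this
    calc I ^ (s * N + N) ≤ (I ^ s) ^ N := by rw [← pow_mul]; exact Ideal.pow_le_pow_right (by omega)
      _ ≤ _ := Ideal.pow_right_mono hs N
  obtain ⟨y, hy⟩ := mem_span_singleton_pow_smul_top_iff.mp hfar
  refine ⟨y + ∑ k ∈ range (s * N), t ^ k • β (N + k), ?_⟩
  rw [smul_add, ← hy, ← sum_range_add_sub_sum_range_pow_smul, add_comm (s * N) N]
  abel

end AdicSeries

section TateLemma

variable {A : Type*} [CommRing A] {C : Type*} [AddCommGroup C] [Module A C]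

instance IsHausdorff.pi {I : Ideal A} [IsHausdorff I C] (ι : Type*) : IsHausdorff I (ι → C) := by
  refine ⟨fun x hx => ?_⟩
  ext i
  refine IsHausdorff.haus ‹_› (x i) fun n => ((hx n).map (LinearMap.proj i)).mono ?_
  rw [Submodule.map_smul'']
  exact Submodule.smul_mono le_rfl le_top

variable {t : A}

/-- Telescoping `z₀ = tᴺ zᴺ + ∑_{n<N} tⁿ (zₙ - t zₙ₊₁)` exhibits `z₀` as the `t`-adic limit of a
series with terms in `D`. -/
theorem Submodule.HasAdicSeriesLimits.mem_of_sub_smul_succ_mem [IsHausdorff (Ideal.span {t}) C]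
    {D : Submodule A C} (hD : D.HasAdicSeriesLimits t) {z : ℕ → C}
    (hz : ∀ n, z n - t • z (n + 1) ∈ D) : z 0 ∈ D := by
  obtain ⟨d, hdD, hd⟩ := hD _ hz
  suffices z 0 = d from this ▸ hdD
  rw [← sub_eq_zero]
  refine IsHausdorff.haus ‹_› _ fun N => ?_
  obtain ⟨y, hy⟩ := hd N
  rw [sum_range_pow_smul_sub_smul_succ] at hy
  rw [SModEq.sub_mem, sub_zero, mem_span_singleton_pow_smul_top_iff]
  exact ⟨z N - y, by rw [smul_sub, ← hy]; abel⟩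

theorem Submodule.exists_seq_eq_smul_succ {Q : Type*} [AddCommGroup Q] [Module A Q]
    {N : Submodule A Q} (hN : ∀ x ∈ N, ∃ y ∈ N, x = t • y) {x : Q} (hx : x ∈ N) :
    ∃ f : ℕ → Q, f 0 = x ∧ ∀ n, f n = t • f (n + 1) := by
  choose F hFN hF using fun v : N => hN v v.2
  let g : N → N := fun v => ⟨F v, hFN v⟩
  refine ⟨fun n => (g^[n] ⟨x, hx⟩ : Q), rfl, fun n => ?_⟩
  dsimp only
  rw [Function.iterate_succ_apply']
  exact hF _

theorem Submodule.FG.exists_fg_map_eq {P Q : Type*} [AddCommGroup P] [Module A P]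
    [AddCommGroup Q] [Module A Q] {f : P →ₗ[A] Q} (hf : Function.Surjective f)
    {Y : Submodule A Q} (hY : Y.FG) : ∃ Y₁ : Submodule A P, Y₁.FG ∧ Y₁.map f = Y := by
  classical
  obtain ⟨S, rfl⟩ := hY
  refine ⟨Submodule.span A (S.image (Function.surjInv hf)), ⟨_, rfl⟩, ?_⟩
  rw [Submodule.map_span, Finset.coe_image, Set.image_image]
  simp [Function.surjInv_eq hf]

theorem Submodule.comap_subtype_sup_map_subtype (Z B : Submodule A C) (Y : Submodule A Z) :
    (B ⊔ Y.map Z.subtype).comap Z.subtype = B.comap Z.subtype ⊔ Y := by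
  ext z
  simp only [Submodule.mem_comap, Submodule.mem_sup, Submodule.mem_map, Submodule.subtype_apply]
  constructor
  · rintro ⟨b, hb, _, ⟨y, hy, rfl⟩, hz⟩
    refine ⟨z - y, ?_, y, hy, sub_add_cancel z y⟩
    rwa [Submodule.coe_sub, ← hz, add_sub_cancel_right]
  · rintro ⟨b, hb, y, hy, rfl⟩
    exact ⟨b, hb, y, ⟨y, hy, rfl⟩, rfl⟩

theorem divisible_submodule_eq_bot_of_hasAdicSeriesLimits [IsHausdorff (Ideal.span {t}) C]
    (hA : (⊤ : Submodule A A).HasAdicSeriesLimits t) {Z B : Submodule A C}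
    (hB : B.HasAdicSeriesLimits t) {Y : Submodule A (Z ⧸ B.comap Z.subtype)} (hY : Y.FG)
    (N : Submodule A ((Z ⧸ B.comap Z.subtype) ⧸ Y)) (hN : ∀ x ∈ N, ∃ y ∈ N, x = t • y) :
    N = ⊥ := by
  obtain ⟨Y₁, hY₁, rfl⟩ := hY.exists_fg_map_eq (B.comap Z.subtype).mkQ_surjective
  set π := (Y₁.map (B.comap Z.subtype).mkQ).mkQ ∘ₗ (B.comap Z.subtype).mkQ
  have hker : LinearMap.ker π = (B ⊔ Y₁.map Z.subtype).comap Z.subtype := by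
    rw [Submodule.comap_subtype_sup_map_subtype, LinearMap.ker_comp, Submodule.ker_mkQ,
      Submodule.comap_map_mkQ]
  have hD : (B ⊔ Y₁.map Z.subtype).HasAdicSeriesLimits t := hB.sup (.of_fg hA (hY₁.map _))
  rw [eq_bot_iff]
  intro x hx
  obtain ⟨f, rfl, hf⟩ := Submodule.exists_seq_eq_smul_succ hN hx
  have hπ : Function.Surjective π := (Submodule.mkQ_surjective _).comp (Submodule.mkQ_surjective _)
  choose z hz using fun n => hπ (f n)
  have hz0 : z 0 ∈ LinearMap.ker π := by
    rw [hker, Submodule.mem_comap]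
    refine hD.mem_of_sub_smul_succ_mem (z := fun n => Z.subtype (z n)) fun n => ?_
    rw [← map_smul, ← map_sub, ← Submodule.mem_comap, ← hker, LinearMap.mem_ker, map_sub,
      map_smul, hz, hz, hf, sub_self]
  rw [← hz 0]
  exact hz0

end TateLemma

theorem IsDiscreteValuationRing.exists_maximalIdeal_pow_le_span_singleton {A : Type*}
    [CommRing A] [IsDomain A] [IsDiscreteValuationRing A] {t : A} (ht0 : t ≠ 0) :
    ∃ s, IsLocalRing.maximalIdeal A ^ s ≤ Ideal.span {t} := by
  obtain ⟨ϖ, hϖ⟩ := exists_irreducible A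
  obtain ⟨s, hs⟩ := ideal_eq_span_pow_irreducible (s := Ideal.span {t}) (by simpa using ht0) hϖ
  refine ⟨s, ?_⟩
  rw [(irreducible_iff_uniformizer ϖ).mp hϖ, Ideal.span_singleton_pow, hs]

def HasAdicTopology {A : Type*} [CommRing A] (t : A) (M : Type*) [AddCommGroup M] [Module A M]
    [TopologicalSpace M] : Prop :=
  ∀ s : Set M, IsOpen s ↔ ∀ m ∈ s, ∃ n : ℕ,
    {y : M | y - m ∈ (Ideal.span {t} ^ n) • (⊤ : Submodule A M)} ⊆ s

theorem continuous_of_adic_uniform_limit {A : Type*} [CommRing A] {t : A} {X M : Type*}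
    [TopologicalSpace X] [AddCommGroup M] [Module A M] [TopologicalSpace M]
    (hadic : HasAdicTopology t M) {f : ℕ → X → M} (hf : ∀ n, Continuous (f n)) {L : X → M}
    (hL : ∀ n, ∃ g, L - f n = t ^ n • g) : Continuous L := by
  set P : ℕ → Submodule A M := fun n => Ideal.span {t} ^ n • ⊤
  have hball (n : ℕ) (m : M) : IsOpen {y | y - m ∈ P n} :=
    (hadic _).mpr fun m' hm' => ⟨n, fun y hy => by
      simpa using add_mem (show y - m' ∈ P n from hy) (show m' - m ∈ P n from hm')⟩
  have hLf (n : ℕ) (x : X) : L x - f n x ∈ P n := by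
    obtain ⟨g, hg⟩ := hL n
    exact mem_span_singleton_pow_smul_top_iff.mpr ⟨g x, congrFun hg x⟩
  rw [continuous_def]
  intro s hs
  rw [isOpen_iff_forall_mem_open]
  intro x₀ hx₀
  obtain ⟨n, hn⟩ := (hadic s).mp hs _ hx₀
  refine ⟨f n ⁻¹' {y | y - f n x₀ ∈ P n}, fun x hx => hn ?_,
    (hf n).isOpen_preimage _ (hball n _), by simp⟩
  have := add_mem (add_mem (hLf n x) hx) (neg_mem (hLf n x₀))
  simpa using this

section ContinuousCochains

variable {A : Type} [CommRing A] {t : A} {Γ : Type} [TopologicalSpace Γ]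
  {M : Type} [AddCommGroup M] [Module A M] [TopologicalSpace M] [ContinuousAdd M]
  [ContinuousConstSMul A M]

theorem contCochains_hasAdicSeriesLimits (hadic : HasAdicTopology t M)
    (hM : (⊤ : Submodule A M).HasAdicSeriesLimits t) (n : ℕ) :
    (contCochains A Γ M n).HasAdicSeriesLimits t := by
  intro β hβ
  obtain ⟨d, -, hd⟩ := hM.pi_top (Fin n → Γ) β fun _ => trivial
  refine ⟨d, continuous_of_adic_uniform_limit hadic (fun N => ?_) hd, hd⟩
  exact Submodule.sum_mem (contCochains A Γ M n) fun k _ => Submodule.smul_mem _ _ (hβ k)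

theorem contCoboundaries_hasAdicSeriesLimits [Group Γ] [DistribMulAction Γ M]
    [SMulCommClass Γ A M] (hadic : HasAdicTopology t M)
    (hM : (⊤ : Submodule A M).HasAdicSeriesLimits t) (i : ℕ) :
    (contCoboundaries A Γ M i).HasAdicSeriesLimits t := by
  cases i with
  | zero => exact Submodule.hasAdicSeriesLimits_bot t
  | succ n => exact (contCochains_hasAdicSeriesLimits hadic hM n).map _

end ContinuousCochains

theorem no_divisible_submodule_in_quotient_of_continuousCohomology_general
    (A : Type) [CommRing A] [IsDomain A] [IsDiscreteValuationRing A]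
    [IsAdicComplete (IsLocalRing.maximalIdeal A) A]
    (t : A) (ht0 : t ≠ 0) (ht : t ∈ IsLocalRing.maximalIdeal A)
    (Γ : Type) [Group Γ] [TopologicalSpace Γ]
    (M : Type) [AddCommGroup M] [Module A M] [Module.Finite A M]
    [TopologicalSpace M] [ContinuousAdd M] [ContinuousConstSMul A M]
    [DistribMulAction Γ M] [SMulCommClass Γ A M]
    (hadic : ∀ s : Set M, IsOpen s ↔ ∀ m ∈ s, ∃ n : ℕ,
      {y : M | y - m ∈ (Ideal.span {t} ^ n) • (⊤ : Submodule A M)} ⊆ s)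
    (i : ℕ) (Y : Submodule A (ContinuousCohomology A Γ M i)) (hY : Y.FG) :
    ∀ N : Submodule A ((ContinuousCohomology A Γ M i) ⧸ Y),
      (∀ x ∈ N, ∃ y ∈ N, x = t • y) → N = ⊥ := by
  obtain ⟨s, hs⟩ := IsDiscreteValuationRing.exists_maximalIdeal_pow_le_span_singleton ht0
  have hA : (⊤ : Submodule A A).HasAdicSeriesLimits t :=
    hasAdicSeriesLimits_top_of_isPrecomplete ht hs
  have : IsHausdorff (Ideal.span {t}) M := IsHausdorff.of_isLocalRing _ _ <|
    ne_top_of_le_ne_top (IsLocalRing.maximalIdeal.isMaximal A).ne_top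
      ((Ideal.span_singleton_le_iff_mem _).mpr ht)
  exact divisible_submodule_eq_bot_of_hasAdicSeriesLimits hA
    (contCoboundaries_hasAdicSeriesLimits hadic (hA.of_fg Module.Finite.fg_top) i) hY

/-- **No nontrivial `t`-divisible submodules in quotients of continuous cohomology.**
Let `A` be a complete discrete valuation ring, `t ∈ 𝔪_A` nonzero, `Γ` a profinite group and
`M` a finitely generated `A`-module, endowed with its `t`-adic topology and a continuous
`A`-linear `Γ`-action.  If `Y` is a finitely generated `A`-submodule of the continuous
cohomology `H^i(Γ, M)`, then `H^i(Γ, M) / Y` contains no nontrivial `t`-divisible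
submodule. -/
theorem no_divisible_submodule_in_quotient_of_continuousCohomology
    (A : Type) [CommRing A] [IsDomain A] [IsDiscreteValuationRing A]
    [IsAdicComplete (IsLocalRing.maximalIdeal A) A]
    (t : A) (ht0 : t ≠ 0) (ht : t ∈ IsLocalRing.maximalIdeal A)
    (Γ : Type) [Group Γ] [TopologicalSpace Γ] [IsTopologicalGroup Γ]
    [CompactSpace Γ] [T2Space Γ] [TotallyDisconnectedSpace Γ]
    (M : Type) [AddCommGroup M] [Module A M] [Module.Finite A M]
    [TopologicalSpace M] [ContinuousAdd M] [ContinuousConstSMul A M]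
    [DistribMulAction Γ M] [SMulCommClass Γ A M] [ContinuousSMul Γ M]
    (hadic : ∀ s : Set M, IsOpen s ↔ ∀ m ∈ s, ∃ n : ℕ,
      {y : M | y - m ∈ (Ideal.span {t} ^ n) • (⊤ : Submodule A M)} ⊆ s)
    (i : ℕ) (Y : Submodule A (ContinuousCohomology A Γ M i)) (hY : Y.FG) :
    ∀ N : Submodule A ((ContinuousCohomology A Γ M i) ⧸ Y),
      (∀ x ∈ N, ∃ y ∈ N, x = t • y) → N = ⊥ :=
  no_divisible_submodule_in_quotient_of_continuousCohomology_general A t ht0 ht Γ M hadic i Y hY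
end

section
/- Let K be an imaginary CM field with maximal totally real subfield K^+, and n ≥ 2 an integer. Let a ∈ K satisfy N_{K/K^+}(a) = 1, and let K_a be the splitting field over K of x^n − a. Then K_a/K is a soluble extension and K_a is a CM field. -/
/-!
Let `c` be the nontrivial automorphism of `K/K⁺`. Since `K⁺` is totally real and `K` totally
imaginary, `c` induces complex conjugation under every embedding `K → ℂ`, so the norm condition
`a · c(a) = 1` puts every conjugate of `a`, hence of every root `α` of `x^n - a`, on the unit
circle. Thus complex conjugation sends `α` to `α⁻¹` and `x ∈ K` to `c(x)` under every
embedding of `K_a`; as these elements generate `K_a`, a single automorphism `τ` of `K_a`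
induces complex conjugation under all embeddings, and its fixed field is a totally real
subfield of index `2`. Solubility is that of the Galois group of `x^n - a`.
-/

open NumberField Polynomial ComplexEmbedding InfinitePlace
open scoped ComplexConjugate

theorem Subfield.closure_range_algebraMap_union_eq_top {K L : Type*} [Field K] [Field L]
    [Algebra K L] {S : Set L} (hS : Algebra.adjoin K S = ⊤) :
    Subfield.closure (Set.range (algebraMap K L) ∪ S) = ⊤ := by
  rw [← IntermediateField.adjoin_toSubfield, IntermediateField.adjoin_eq_top_of_algebra K S hS,
    IntermediateField.top_toSubfield]

theorem Polynomial.IsSplittingField.isSolvable_algEquiv {K L : Type*} [Field K] [Field L]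
    [Algebra K L] (p : K[X]) [IsSplittingField K L p] [Group.IsSolvable p.Gal] :
    Group.IsSolvable (L ≃ₐ[K] L) := by
  let e := AlgEquiv.autCongr (IsSplittingField.algEquiv L p).symm
  exact Group.isSolvable_of_surjective (G := p.Gal) (f := e.toMonoidHom) e.surjective

theorem norm_eq_one_of_mem_rootSet_X_pow_sub_C {K L : Type*} [Field K] [Field L] [Algebra K L]
    {n : ℕ} {a : K} (φ : L →+* ℂ) (ha : ‖φ (algebraMap K L a)‖ = 1) {s : L}
    (hs : s ∈ (X ^ n - C a).rootSet L) : ‖φ s‖ = 1 := by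
  obtain ⟨hp, hs⟩ := mem_rootSet.mp hs
  have hsn : s ^ n = algebraMap K L a := by simpa [sub_eq_zero] using hs
  have hn : n ≠ 0 := by
    rintro rfl
    have ha1 : a = 1 := (algebraMap K L).injective (by rw [← hsn, pow_zero, map_one])
    exact hp (by rw [ha1, map_one, pow_zero, sub_self])
  have : ‖φ s‖ ^ n = 1 := by rw [← norm_pow, ← map_pow, hsn, ha]
  exact (pow_eq_one_iff_of_nonneg (norm_nonneg _) hn).mp this

theorem Algebra.IsQuadraticExtension.existsUnique_ne_one (F K : Type*) [Field F] [Field K]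
    [Algebra F K] [Algebra.IsQuadraticExtension F K] [Algebra.IsSeparable F K] :
    ∃! σ : Gal(K/F), σ ≠ 1 :=
  (Nat.card_eq_two_iff' 1).mp <| finrank_eq_two F K ▸ IsGalois.card_aut_eq_finrank F K

theorem Algebra.IsQuadraticExtension.algebraMap_norm_eq_mul_apply {F K : Type*} [Field F]
    [Field K] [Algebra F K] [Algebra.IsQuadraticExtension F K] [Algebra.IsSeparable F K]
    {c : Gal(K/F)} (hc : c ≠ 1) (x : K) :
    algebraMap F K (Algebra.norm F x) = x * c x := by
  obtain ⟨ρ, -, hunique⟩ := existsUnique_ne_one F K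
  rw [Algebra.norm_eq_prod_automorphisms, Fintype.prod_eq_mul 1 c hc.symm fun σ hσ ↦
    absurd ((hunique σ hσ.1).trans (hunique c hc).symm) hσ.2]
  rfl

namespace NumberField.ComplexEmbedding

variable {L : Type*} [Field L] [CharZero L] [Algebra.IsAlgebraic ℚ L]

theorem exists_isConj_of_conj_mem_fieldRange (φ : L →+* ℂ)
    (h : ∀ x, conj (φ x) ∈ φ.fieldRange) : ∃ τ : Gal(L/ℚ), IsConj φ τ := by
  let τ : L →+* L := φ.rangeRestrictFieldEquiv.symm.toRingHom.comp
    (((starRingEnd ℂ).comp φ).codRestrict φ.fieldRange h)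
  refine ⟨AlgEquiv.ofBijective τ.toRatAlgHom
    (Algebra.IsAlgebraic.algHom_bijective τ.toRatAlgHom), ?_⟩
  ext x
  show conj (φ x) = φ (τ x)
  simp [τ]

theorem exists_forall_isConj_of_closure_eq_top [Nonempty (L →+* ℂ)] {T : Set L}
    (hT : Subfield.closure T = ⊤)
    (hconj : ∀ t ∈ T, ∃ u, ∀ φ : L →+* ℂ, conj (φ t) = φ u) :
    ∃ τ : Gal(L/ℚ), ∀ φ : L →+* ℂ, IsConj φ τ := by
  obtain ⟨φ₀⟩ := ‹Nonempty (L →+* ℂ)›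
  have hφ₀ : ∀ x, conj (φ₀ x) ∈ φ₀.fieldRange := by
    have : Subfield.closure T ≤ (φ₀.fieldRange.comap (starRingEnd ℂ)).comap φ₀ :=
      Subfield.closure_le.mpr fun t ht ↦ by
        obtain ⟨u, hu⟩ := hconj t ht
        exact ⟨u, (hu φ₀).symm⟩
    exact fun x ↦ this (hT ▸ Subfield.mem_top x)
  obtain ⟨τ, hτ⟩ := exists_isConj_of_conj_mem_fieldRange φ₀ hφ₀
  refine ⟨τ, fun φ ↦ RingHom.ext fun x ↦ ?_⟩
  have : Subfield.closure T ≤ RingHom.eqLocusField (conjugate φ) (φ.comp τ) :=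
    Subfield.closure_le.mpr fun t ht ↦ by
      obtain ⟨u, hu⟩ := hconj t ht
      have hτt : τ t = u := φ₀.injective (by rw [hτ.eq, ← hu]; rfl)
      show conj (φ t) = φ (τ t)
      rw [hτt, hu]
  exact this (hT ▸ Subfield.mem_top x)

end NumberField.ComplexEmbedding

theorem NumberField.IsCMField.of_forall_isConj' {K : Type*} [Field K] [CharZero K]
    [Algebra.IsIntegral ℚ K] [IsTotallyComplex K] {σ : Gal(K/ℚ)}
    (hσ : ∀ φ : K →+* ℂ, IsConj φ σ) : IsCMField K := by
  let φ : K →+* ℂ := Classical.choice inferInstance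
  have hcard : Nat.card (Subgroup.zpowers σ) = 2 := by
    rw [Nat.card_zpowers, orderOf_isConj_two_of_ne_one (hσ φ)]
    exact (isConj_ne_one_iff (hσ φ)).mpr <| IsTotallyComplex.complexEmbedding_not_isReal φ
  have : Finite (Subgroup.zpowers σ) := Nat.finite_of_card_ne_zero (by positivity)
  let F := FixedPoints.subfield (Subgroup.zpowers σ) K
  have : IsTotallyReal F := ⟨fun w ↦ by
    obtain ⟨W, rfl⟩ := w.comap_surjective (K := K)
    dsimp only
    rw [← mk_embedding W, comap_mk, isReal_mk_iff]
    exact (hσ W.embedding).isReal_comp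
      (σ := IsGaloisGroup.mulEquivAlgEquiv (Subgroup.zpowers σ) F K
        ⟨σ, Subgroup.mem_zpowers σ⟩)⟩
  have : Algebra.IsQuadraticExtension F K :=
    ⟨by rw [← IsGaloisGroup.card_eq_finrank (Subgroup.zpowers σ), hcard]⟩
  exact IsCMField.ofCMExtension F K

namespace NumberField.CMExtension

variable (F : Type*) {K : Type*} [Field F] [CharZero F] [IsTotallyReal F] [Field K]
  [IsTotallyComplex K] [Algebra F K] [Algebra.IsQuadraticExtension F K]

theorem isConj_iff_ne_one (φ : K →+* ℂ) (σ : Gal(K/F)) : IsConj φ σ ↔ σ ≠ 1 := by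
  obtain ⟨τ, hτ⟩ := exists_isConj_of_isRamified (k := F) (φ := φ) <|
    isRamified_iff.mpr ⟨IsTotallyComplex.isComplex _, IsTotallyReal.isReal _⟩
  have hτ1 : τ ≠ 1 :=
    (isConj_ne_one_iff hτ).mpr (IsTotallyComplex.complexEmbedding_not_isReal φ)
  obtain ⟨ρ, -, hunique⟩ := Algebra.IsQuadraticExtension.existsUnique_ne_one F K
  rw [← hτ.ext_iff]
  exact ⟨fun h ↦ h ▸ hτ1, fun hσ ↦ (hunique τ hτ1).trans (hunique σ hσ).symm⟩

theorem exists_forall_isConj : ∃ c : Gal(K/F), ∀ φ : K →+* ℂ, IsConj φ c := by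
  obtain ⟨c, hc, -⟩ := Algebra.IsQuadraticExtension.existsUnique_ne_one F K
  exact ⟨c, fun φ ↦ (isConj_iff_ne_one F φ c).mpr hc⟩

theorem complexEmbedding_algebraMap_norm (φ : K →+* ℂ) (x : K) :
    φ (algebraMap F K (Algebra.norm F x)) = (‖φ x‖ : ℂ) ^ 2 := by
  obtain ⟨c, hc⟩ := exists_forall_isConj F (K := K)
  have hc1 : c ≠ 1 := (isConj_iff_ne_one F φ c).mp (hc φ)
  rw [Algebra.IsQuadraticExtension.algebraMap_norm_eq_mul_apply hc1, map_mul, (hc φ).eq,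
    RCLike.star_def, Complex.mul_conj']

theorem norm_complexEmbedding_eq_one_of_norm_eq_one {x : K} (hx : Algebra.norm F x = 1)
    (φ : K →+* ℂ) : ‖φ x‖ = 1 := by
  have h := complexEmbedding_algebraMap_norm F φ x
  rw [hx, map_one, map_one] at h
  exact (pow_eq_one_iff_of_nonneg (norm_nonneg _) two_ne_zero).mp (by exact_mod_cast h.symm)

end NumberField.CMExtension

theorem splittingField_of_norm_one_is_CM_general
    (Kplus : Type) [Field Kplus] [NumberField Kplus]
    (K : Type) [Field K] [NumberField K] [Algebra Kplus K]
    (htr : ∀ v : InfinitePlace Kplus, v.IsReal)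
    (him : ∀ v : InfinitePlace K, v.IsComplex)
    (hquad : Module.finrank Kplus K = 2)
    (n : ℕ) (a : K) (ha : Algebra.norm Kplus a = 1)
    (Ka : Type) [Field Ka] [Algebra K Ka]
    (hKa : IsSplittingField K Ka (X ^ n - C a)) :
    IsSolvable (Ka ≃ₐ[K] Ka) ∧
    (∀ v : InfinitePlace Ka, v.IsComplex) ∧
    ∃ F : Subfield Ka, (∀ w : InfinitePlace F, w.IsReal) ∧ Module.finrank F Ka = 2 := by
  have : IsTotallyReal Kplus := ⟨htr⟩
  have : IsTotallyComplex K := ⟨him⟩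
  have : Algebra.IsQuadraticExtension Kplus K := ⟨hquad⟩
  have : FiniteDimensional K Ka := IsSplittingField.finiteDimensional Ka (X ^ n - C a)
  have : NumberField Ka := .of_module_finite K Ka
  have : IsTotallyComplex Ka := isTotallyComplex_of_algebra K Ka
  have : Group.IsSolvable (X ^ n - C a).Gal := gal_X_pow_sub_C_isSolvable n a
  refine ⟨IsSplittingField.isSolvable_algEquiv (X ^ n - C a), IsTotallyComplex.isComplex, ?_⟩
  set ι := algebraMap K Ka
  obtain ⟨c, hc⟩ := CMExtension.exists_forall_isConj Kplus (K := K)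
  have hgen : Subfield.closure (Set.range ι ∪ (X ^ n - C a).rootSet Ka) = ⊤ :=
    Subfield.closure_range_algebraMap_union_eq_top (IsSplittingField.adjoin_rootSet Ka _)
  obtain ⟨τ, hτ⟩ := exists_forall_isConj_of_closure_eq_top hgen <| by
    rintro t (⟨x, rfl⟩ | hroot)
    · exact ⟨ι (c x), fun φ ↦ ((hc (φ.comp ι)).eq x).symm⟩
    · refine ⟨t⁻¹, fun φ ↦ ?_⟩
      have hφa : ‖φ (ι a)‖ = 1 :=
        CMExtension.norm_complexEmbedding_eq_one_of_norm_eq_one Kplus ha (φ.comp ι)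
      rw [map_inv₀, Complex.inv_eq_conj (norm_eq_one_of_mem_rootSet_X_pow_sub_C φ hφa hroot)]
  have : IsCMField Ka := IsCMField.of_forall_isConj' hτ
  exact ⟨maximalRealSubfield Ka, IsTotallyReal.isReal,
    Algebra.IsQuadraticExtension.finrank_eq_two _ _⟩

/-- **Kummer extensions by norm-one elements of CM fields are CM.**
Let `K` be an imaginary CM field with maximal totally real subfield `K⁺` (so `K⁺` is
totally real, `K/K⁺` is quadratic and `K` is totally imaginary), let `n ≥ 2`, and let
`a ∈ K` with `N_{K/K⁺}(a) = 1`.  Let `K_a` be the splitting field of `x^n - a` over `K`.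
Then `K_a/K` is a soluble (Galois) extension and `K_a` is a CM field: it is totally
imaginary and has a totally real subfield over which it is quadratic. -/
theorem splittingField_of_norm_one_is_CM
    (Kplus : Type) [Field Kplus] [NumberField Kplus]
    (K : Type) [Field K] [NumberField K] [Algebra Kplus K]
    (htr : ∀ v : InfinitePlace Kplus, v.IsReal)
    (him : ∀ v : InfinitePlace K, v.IsComplex)
    (hquad : Module.finrank Kplus K = 2)
    (n : ℕ) (hn : 2 ≤ n) (a : K) (ha : Algebra.norm Kplus a = 1)
    (Ka : Type) [Field Ka] [Algebra K Ka]
    (hKa : IsSplittingField K Ka (X ^ n - C a)) :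
    IsSolvable (Ka ≃ₐ[K] Ka) ∧
    (∀ v : InfinitePlace Ka, v.IsComplex) ∧
    ∃ F : Subfield Ka, (∀ w : InfinitePlace F, w.IsReal) ∧ Module.finrank F Ka = 2 :=
  splittingField_of_norm_one_is_CM_general Kplus K htr him hquad n a ha Ka hKa
end

section
/- The polynomial G(y) = y^3 + 2a y^2 + a^2 y + (4/27)a^3 + c is irreducible in C(a)[y] for any nonzero constant c ∈ C^×, where a is transcendental over C. Consequently F(x) = (x^3 + ax)^2 + (4/27)a^3 + c is irreducible in C(a)[x], so the affine curve F(x)=0 in the (a,x)-plane is geometrically irreducible. -/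
open Polynomial

private lemma aux_no_poly_sol (c : ℂ) (hc : c ≠ 0) (p : ℂ[X])
    (h : p * (p + X) ^ 2 + (C (4/27 : ℂ) * X ^ 3 + C c) = 0) : False := by
  set q : ℂ[X] := C (4/27 : ℂ) * X ^ 3 + C c with hqdef
  have hq3 : q.natDegree = 3 := by rw [hqdef]; compute_degree!
  have hqne : q ≠ 0 := fun h0 => by simp [h0] at hq3
  have hmain : p * (p + X) ^ 2 = -q := eq_neg_of_add_eq_zero_left h
  have hp0 : p ≠ 0 := by rintro rfl; rw [zero_mul] at hmain; exact hqne (by simpa using hmain)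
  have hs0 : p + X ≠ 0 := by
    intro h0; rw [h0] at hmain; simp at hmain; exact hqne (by simpa using hmain)
  have hdeg : p.natDegree + 2 * (p + X).natDegree = 3 := by
    have := congrArg natDegree hmain
    rwa [natDegree_mul hp0 (pow_ne_zero 2 hs0), natDegree_pow, natDegree_neg, hq3] at this
  have hsle : (p + X).natDegree = 1 := by
    have hple : p.natDegree ≤ max (p + X).natDegree 1 := by
      have := natDegree_sub_le (p + X) X
      simp only [add_sub_cancel_right, natDegree_X] at this
      exact this
    omega
  have hp1 : p.natDegree ≤ 1 := by omega
  obtain hform := eq_X_add_C_of_natDegree_le_one hp1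
  set a := p.coeff 1
  set b := p.coeff 0
  rw [hform] at hmain
  have hexp : (C a * X + C b) * (C a * X + C b + X) ^ 2 =
      C (a * (a+1)^2) * X ^ 3 + C (b * (a+1) * (3*a+1)) * X ^ 2
        + C (b^2 * (3*a+2)) * X + C (b^3) := by
    simp only [map_mul, map_add, map_pow, map_ofNat, map_one, C_1]
    ring
  rw [hexp, hqdef] at hmain
  have h0 := congrArg (fun r => Polynomial.coeff r 0) hmain
  have h1 := congrArg (fun r => Polynomial.coeff r 1) hmain
  have h2 := congrArg (fun r => Polynomial.coeff r 2) hmain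
  simp only [coeff_add, coeff_neg, coeff_C_mul, coeff_X_pow, coeff_C, coeff_mul_X] at h0 h1 h2
  norm_num at h0 h1 h2
  have hb : b ≠ 0 := fun hb0 => hc (by simpa [hb0] using h0.symm)
  have ha1 : 3*a+2 = 0 := h1.resolve_left hb
  rcases h2 with (hb0 | h2) | h2
  · exact hb hb0
  · have : (-1 : ℂ) = 0 := by linear_combination ha1 - 3*h2
    norm_num at this
  · have : (1 : ℂ) = 0 := by linear_combination ha1 - h2
    norm_num at this

private lemma aux_no_sqrt (c : ℂ) (r : RatFunc ℂ)
    (h : r ^ 2 = -((4/27 : RatFunc ℂ) * RatFunc.X ^ 3 + RatFunc.C c)) : False := by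
  have hint : IsIntegral ℂ[X] r := by
    refine ⟨X ^ 2 + C (C (4/27 : ℂ) * X ^ 3 + C c), by monicity!, ?_⟩
    simp only [map_add, map_pow, map_mul, eval₂_add, eval₂_mul, eval₂_pow, eval₂_X, eval₂_C,
      RatFunc.algebraMap_C, RatFunc.algebraMap_X, map_div₀, map_ofNat, aeval_def]
    linear_combination h
  obtain ⟨p, rfl⟩ := IsIntegrallyClosed.isIntegral_iff.mp hint
  have hmap : (algebraMap ℂ[X] (RatFunc ℂ)) (p ^ 2 + (C (4/27 : ℂ) * X ^ 3 + C c)) = 0 := by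
    simp only [map_add, map_pow, map_mul, RatFunc.algebraMap_C, RatFunc.algebraMap_X,
      map_div₀, map_ofNat]
    linear_combination h
  have heq : p ^ 2 + (C (4/27 : ℂ) * X ^ 3 + C c) = 0 :=
    IsFractionRing.injective ℂ[X] (RatFunc ℂ) (by simpa using hmap)
  have hq3 : (C (4/27 : ℂ) * X ^ 3 + C c).natDegree = 3 := by compute_degree!
  have hp2 : p ^ 2 = -(C (4/27 : ℂ) * X ^ 3 + C c) := eq_neg_of_add_eq_zero_left heq
  have hpne : p ≠ 0 := by
    rintro rfl
    rw [zero_pow (by norm_num), eq_comm, neg_eq_zero] at hp2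
    simp [hp2] at hq3
  have := congrArg natDegree hp2
  rw [natDegree_pow, natDegree_neg, hq3] at this
  omega

private lemma aux_no_root (c : ℂ) (hc : c ≠ 0) (r : RatFunc ℂ)
    (h : r ^ 3 + (2 * RatFunc.X) * r ^ 2 + (RatFunc.X ^ 2) * r
      + ((4/27 : RatFunc ℂ) * RatFunc.X ^ 3 + RatFunc.C c) = 0) : False := by
  have hint : IsIntegral ℂ[X] r := by
    refine ⟨X ^ 3 + C (2 * X) * X ^ 2 + C (X ^ 2) * X + C (C (4/27 : ℂ) * X ^ 3 + C c),
      by monicity!, ?_⟩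
    simp only [map_add, map_pow, map_mul, eval₂_add, eval₂_mul, eval₂_pow, eval₂_X, eval₂_C,
      eval₂_ofNat, RatFunc.algebraMap_C, RatFunc.algebraMap_X, map_div₀, map_ofNat, aeval_def]
    linear_combination h
  obtain ⟨p, rfl⟩ := IsIntegrallyClosed.isIntegral_iff.mp hint
  have hmap : (algebraMap ℂ[X] (RatFunc ℂ))
      (p ^ 3 + 2 * X * p ^ 2 + X ^ 2 * p + (C (4/27 : ℂ) * X ^ 3 + C c)) = 0 := by
    simp only [map_add, map_pow, map_mul, RatFunc.algebraMap_C, RatFunc.algebraMap_X,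
      map_div₀, map_ofNat]
    linear_combination h
  have heq : p ^ 3 + 2 * X * p ^ 2 + X ^ 2 * p + (C (4/27 : ℂ) * X ^ 3 + C c) = 0 :=
    IsFractionRing.injective ℂ[X] (RatFunc ℂ) (by simpa using hmap)
  exact aux_no_poly_sol c hc p (by linear_combination heq)

private lemma aux_G_irred (c : ℂ) (hc : c ≠ 0) :
    Irreducible (X ^ 3 + C (2 * RatFunc.X) * X ^ 2 + C (RatFunc.X ^ 2) * X +
      C ((4 / 27) * RatFunc.X ^ 3 + RatFunc.C c) : Polynomial (RatFunc ℂ)) := by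
  set G : Polynomial (RatFunc ℂ) := X ^ 3 + C (2 * RatFunc.X) * X ^ 2 + C (RatFunc.X ^ 2) * X +
      C ((4 / 27) * RatFunc.X ^ 3 + RatFunc.C c) with hGdef
  have hmonic : G.Monic := by rw [hGdef]; monicity!
  have hdeg : G.natDegree = 3 := by rw [hGdef]; compute_degree!
  rw [hmonic.irreducible_iff_roots_eq_zero_of_degree_le_three (by omega) (by omega)]
  rw [Multiset.eq_zero_iff_forall_notMem]
  intro r hr
  rw [mem_roots hmonic.ne_zero, IsRoot.def, hGdef] at hr
  simp only [eval_add, eval_mul, eval_pow, eval_X, eval_C] at hr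
  exact aux_no_root c hc r (by linear_combination hr)

private lemma aux_factor_deg (c : ℂ) (hc : c ≠ 0) (P : Polynomial (RatFunc ℂ))
    (hP : Irreducible P)
    (hdvd : P ∣ ((X ^ 3 + C RatFunc.X * X) ^ 2 +
      C ((4 / 27) * RatFunc.X ^ 3 + RatFunc.C c))) : 3 ∣ P.natDegree := by
  set K := RatFunc ℂ
  set G : Polynomial K := X ^ 3 + C (2 * RatFunc.X) * X ^ 2 + C (RatFunc.X ^ 2) * X +
      C ((4 / 27) * RatFunc.X ^ 3 + RatFunc.C c) with hGdef
  set F : Polynomial K := (X ^ 3 + C RatFunc.X * X) ^ 2 +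
      C ((4 / 27) * RatFunc.X ^ 3 + RatFunc.C c) with hFdef
  have hFG : F = G.comp (X ^ 2) := by
    rw [hFdef, hGdef]
    simp only [add_comp, mul_comp, pow_comp, X_comp, C_comp, map_mul, map_pow, map_ofNat,
      Polynomial.ofNat_comp, natCast_comp]
    ring
  have hGmonic : G.Monic := by rw [hGdef]; monicity!
  have hGdeg : G.natDegree = 3 := by rw [hGdef]; compute_degree!
  haveI : Fact (Irreducible P) := ⟨hP⟩
  set L := AdjoinRoot P
  set t : L := AdjoinRoot.root P
  have ht : aeval t F = 0 := by
    rw [AdjoinRoot.aeval_eq, AdjoinRoot.mk_eq_zero]; exact hdvd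
  have ht2 : aeval (t ^ 2) G = 0 := by
    rw [← ht, hFG, aeval_comp]; simp
  haveI := (AdjoinRoot.powerBasis hP.ne_zero).finite
  have hmin : minpoly K (t ^ 2) = G :=
    (minpoly.eq_of_irreducible_of_monic (aux_G_irred c hc) ht2 hGmonic).symm
  have hdvd3 : (minpoly K (t ^ 2)).natDegree ∣ Module.finrank K L :=
    minpoly.degree_dvd (IsIntegral.of_finite K _)
  rw [hmin, hGdeg] at hdvd3
  rwa [(AdjoinRoot.powerBasis hP.ne_zero).finrank, AdjoinRoot.powerBasis_dim] at hdvd3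

private lemma aux_monic_eq_of_dvd {K : Type*} [Field K] {A B : K[X]} (hA : A.Monic)
    (hB : B.Monic) (h : A ∣ B) (hd : A.natDegree = B.natDegree) : A = B := by
  obtain ⟨t, rfl⟩ := h
  have ht : t.Monic := hA.of_mul_monic_left hB
  have := natDegree_mul hA.ne_zero ht.ne_zero
  rw [← hd] at this
  have ht0 : t.natDegree = 0 := by omega
  rw [ht.natDegree_eq_zero.mp ht0, mul_one]

private lemma aux_monic_irred_factor {K : Type*} [Field K] (W : K[X]) (hW : W.Monic)
    (hnd : W.natDegree ≠ 0) : ∃ B : K[X], B.Monic ∧ Irreducible B ∧ B ∣ W := by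
  have hnu : ¬ IsUnit W := fun h => hnd (natDegree_eq_zero_of_isUnit h)
  obtain ⟨B', hB'irr, hB'dvd⟩ := WfDvdMonoid.exists_irreducible_factor hnu hW.ne_zero
  have hlc : B'.leadingCoeff ≠ 0 := leadingCoeff_ne_zero.mpr hB'irr.ne_zero
  have hu : IsUnit (C B'.leadingCoeff⁻¹) := isUnit_C.mpr (isUnit_iff_ne_zero.mpr (inv_ne_zero hlc))
  have hassoc : Associated B' (B' * C B'.leadingCoeff⁻¹) := ⟨hu.unit, by simp⟩
  exact ⟨B' * C B'.leadingCoeff⁻¹, monic_mul_leadingCoeff_inv hB'irr.ne_zero,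
    hassoc.irreducible hB'irr, hassoc.symm.dvd.trans hB'dvd⟩

private lemma aux_cubic_form {K : Type*} [Field K] (W : K[X]) (hW : W.Monic)
    (hd : W.natDegree = 3) :
    W = X ^ 3 + C (W.coeff 2) * X ^ 2 + C (W.coeff 1) * X + C (W.coeff 0) := by
  ext n
  have hc3 : W.coeff 3 = 1 := by
    have := hW.leadingCoeff
    rwa [leadingCoeff, hd] at this
  rcases n with _ | _ | _ | _ | n
  · simp
  · simp
  · simp
  · simp [hc3, coeff_X_pow]
  · have h1 : W.coeff (n + 4) = 0 := coeff_eq_zero_of_natDegree_lt (by omega)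
    have : ((X : K[X]) ^ 3 + C (W.coeff 2) * X ^ 2 + C (W.coeff 1) * X
        + C (W.coeff 0)).coeff (n+4) = 0 := by
      simp [coeff_X_pow, coeff_C]
    rw [h1, this]

private lemma aux_F_irred (c : ℂ) (hc : c ≠ 0) :
    Irreducible ((X ^ 3 + C RatFunc.X * X) ^ 2 +
      C ((4 / 27) * RatFunc.X ^ 3 + RatFunc.C c) : Polynomial (RatFunc ℂ)) := by
  set F : Polynomial (RatFunc ℂ) := (X ^ 3 + C RatFunc.X * X) ^ 2 +
      C ((4 / 27) * RatFunc.X ^ 3 + RatFunc.C c) with hFdef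
  have hFmonic : F.Monic := by rw [hFdef]; monicity!
  have hFdeg : F.natDegree = 6 := by rw [hFdef]; compute_degree!
  by_contra hnot
  obtain ⟨P, hPmonic, hPirr, hPdvd⟩ := aux_monic_irred_factor F hFmonic (by omega)
  have h3P : 3 ∣ P.natDegree := aux_factor_deg c hc P hPirr hPdvd
  have hPle : P.natDegree ≤ 6 := hFdeg ▸ natDegree_le_of_dvd hPdvd hFmonic.ne_zero
  have hPnd0 : P.natDegree ≠ 0 := fun h =>
    hPirr.not_isUnit (hPmonic.natDegree_eq_zero.mp h ▸ isUnit_one)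
  have hPdeg : P.natDegree = 3 ∨ P.natDegree = 6 := by omega
  rcases hPdeg with hPdeg | hPdeg
  · -- degree 3 factor
    obtain ⟨Q, hPQ⟩ := hPdvd
    have hQmonic : Q.Monic := hPmonic.of_mul_monic_left (hPQ ▸ hFmonic)
    have hQdeg : Q.natDegree = 3 := by
      have := natDegree_mul hPmonic.ne_zero hQmonic.ne_zero
      rw [← hPQ, hFdeg, hPdeg] at this
      omega
    -- Q is irreducible too
    have hQirr : Irreducible Q := by
      obtain ⟨B, hBmonic, hBirr, hBdvd⟩ := aux_monic_irred_factor Q hQmonic (by omega)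
      have h3B : 3 ∣ B.natDegree :=
        aux_factor_deg c hc B hBirr (hBdvd.trans (Dvd.intro_left P hPQ.symm))
      have hBle : B.natDegree ≤ 3 := hQdeg ▸ natDegree_le_of_dvd hBdvd hQmonic.ne_zero
      have hBnd0 : B.natDegree ≠ 0 := fun h =>
        hBirr.not_isUnit (hBmonic.natDegree_eq_zero.mp h ▸ isUnit_one)
      have : B = Q := aux_monic_eq_of_dvd hBmonic hQmonic hBdvd (by omega)
      exact this ▸ hBirr
    set a2 := P.coeff 2
    set a1 := P.coeff 1
    set a0 := P.coeff 0
    set b2 := Q.coeff 2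
    set b1 := Q.coeff 1
    set b0 := Q.coeff 0
    have hPform : P = X ^ 3 + C a2 * X ^ 2 + C a1 * X + C a0 := aux_cubic_form P hPmonic hPdeg
    have hQform : Q = X ^ 3 + C b2 * X ^ 2 + C b1 * X + C b0 := aux_cubic_form Q hQmonic hQdeg
    set R : Polynomial (RatFunc ℂ) := X ^ 3 - C a2 * X ^ 2 + C a1 * X - C a0 with hRdef
    set S : Polynomial (RatFunc ℂ) := X ^ 3 - C b2 * X ^ 2 + C b1 * X - C b0 with hSdef
    have hRS : F = R * S := by
      have h := congrArg (fun W : Polynomial (RatFunc ℂ) => W.comp (-X)) hPQ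
      rw [hPform, hQform] at h
      simp only [hFdef, mul_comp, add_comp, sub_comp, pow_comp, X_comp, C_comp, neg_comp] at h
      rw [hFdef, hRdef, hSdef]
      linear_combination h
    have hRmonic : R.Monic := by rw [hRdef]; monicity!
    have hSmonic : S.Monic := by rw [hSdef]; monicity!
    have hRdeg : R.natDegree = 3 := by rw [hRdef]; compute_degree!
    have hSdeg : S.natDegree = 3 := by rw [hSdef]; compute_degree!
    have hPprime : Prime P := UniqueFactorizationMonoid.irreducible_iff_prime.mp hPirr
    have hPRS : P ∣ R * S := hRS ▸ (⟨Q, hPQ⟩ : P ∣ F)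
    rcases hPprime.dvd_mul.mp hPRS with hPR | hPS
    · -- P = R forces coeff 0 of P to vanish, contradicting irreducibility
      have hPeqR : P = R := aux_monic_eq_of_dvd hPmonic hRmonic hPR (by omega)
      have ha0 : a0 = 0 := by
        have := congrArg (fun W : Polynomial (RatFunc ℂ) => W.coeff 0) (hPform.symm.trans (hPeqR.trans hRdef))
        simp only [coeff_add, coeff_sub, coeff_C_mul, coeff_X_pow, coeff_C, coeff_X] at this
        norm_num at this
        have h2 : (algebraMap ℂ[X] (RatFunc ℂ)) 2 * a0 = 0 := by
          simp only [map_ofNat]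
          linear_combination this
        rcases mul_eq_zero.mp h2 with h | h
        · exact absurd h (by simp)
        · exact h
      have hXdvd : X ∣ P := X_dvd_iff.mpr ha0
      obtain ⟨W, hW⟩ := hXdvd
      rcases hPirr.isUnit_or_isUnit hW with h | h
      · exact not_isUnit_X h
      · have := natDegree_eq_zero_of_isUnit h
        have hWdeg := congrArg natDegree hW
        rw [natDegree_mul X_ne_zero (fun h0 => by simp [h0, hW] at hPdeg), natDegree_X] at hWdeg
        omega
    · -- P = S forces F(0) = -a0^2, contradicting aux_no_sqrt
      have hPeqS : P = S := aux_monic_eq_of_dvd hPmonic hSmonic hPS (by omega)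
      have hb0 : b0 = -a0 := by
        have := congrArg (fun W : Polynomial (RatFunc ℂ) => W.coeff 0) (hPform.symm.trans (hPeqS.trans hSdef))
        simp only [coeff_add, coeff_sub, coeff_C_mul, coeff_X_pow, coeff_C, coeff_X] at this
        norm_num at this
        linear_combination this
      have heval := congrArg (fun W : Polynomial (RatFunc ℂ) => eval 0 W) hPQ
      rw [hFdef, hPform, hQform] at heval
      simp only [eval_add, eval_mul, eval_pow, eval_X, eval_C, eval_sub] at heval
      refine aux_no_sqrt c a0 ?_
      rw [hb0] at heval
      linear_combination heval
  · -- degree 6: F = P, contradiction with hnot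
    obtain ⟨Q, hPQ⟩ := hPdvd
    have hQmonic : Q.Monic := hPmonic.of_mul_monic_left (hPQ ▸ hFmonic)
    have hQdeg : Q.natDegree = 0 := by
      have := natDegree_mul hPmonic.ne_zero hQmonic.ne_zero
      rw [← hPQ, hFdeg, hPdeg] at this
      omega
    rw [hQmonic.natDegree_eq_zero.mp hQdeg, mul_one] at hPQ
    exact hnot (hPQ ▸ hPirr)

/-- **Irreducibility of the curve of Weierstrass equations with fixed discriminant.**
Let `a` be transcendental over `ℂ` (so `ℂ(a)` is the rational function field) and let
`c ∈ ℂ` be a nonzero constant.  Then `G(y) = y³ + 2a y² + a² y + (4/27)a³ + c` is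
irreducible in `ℂ(a)[y]`; consequently `F(x) = (x³ + a x)² + (4/27)a³ + c` is irreducible
in `ℂ(a)[x]`, so the affine curve `F(x) = 0` in the `(a, x)`-plane is geometrically
irreducible (the ideal it generates in `ℂ[a][x]` is prime). -/
theorem irreducible_G_and_F (c : ℂ) (hc : c ≠ 0) :
    Irreducible (X ^ 3 + C (2 * RatFunc.X) * X ^ 2 + C (RatFunc.X ^ 2) * X +
      C ((4 / 27) * RatFunc.X ^ 3 + RatFunc.C c) : Polynomial (RatFunc ℂ)) ∧
    Irreducible ((X ^ 3 + C RatFunc.X * X) ^ 2 +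
      C ((4 / 27) * RatFunc.X ^ 3 + RatFunc.C c) : Polynomial (RatFunc ℂ)) ∧
    (Ideal.span {((X ^ 3 + C (X : Polynomial ℂ) * X) ^ 2 +
        C (C (4 / 27 : ℂ) * (X : Polynomial ℂ) ^ 3 + C c) :
        Polynomial (Polynomial ℂ))}).IsPrime := by
  refine ⟨aux_G_irred c hc, aux_F_irred c hc, ?_⟩
  set F0 : Polynomial (Polynomial ℂ) := (X ^ 3 + C (X : Polynomial ℂ) * X) ^ 2 +
      C (C (4 / 27 : ℂ) * (X : Polynomial ℂ) ^ 3 + C c) with hF0def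
  have hF0monic : F0.Monic := by rw [hF0def]; monicity!
  have hmap : F0.map (algebraMap ℂ[X] (RatFunc ℂ)) =
      ((X ^ 3 + C RatFunc.X * X) ^ 2 +
        C ((4 / 27) * RatFunc.X ^ 3 + RatFunc.C c) : Polynomial (RatFunc ℂ)) := by
    rw [hF0def]
    simp only [Polynomial.map_add, Polynomial.map_pow, Polynomial.map_mul, map_X, map_C,
      map_add, map_mul, map_pow, RatFunc.algebraMap_C, RatFunc.algebraMap_X, map_div₀, map_ofNat]
  have hF0irr : Irreducible F0 := by
    refine (hF0monic.irreducible_iff_irreducible_map_fraction_map (K := RatFunc ℂ)).mpr ?_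
    rw [hmap]
    exact aux_F_irred c hc
  exact (Ideal.span_singleton_prime hF0monic.ne_zero).mpr
    (UniqueFactorizationMonoid.irreducible_iff_prime.mp hF0irr)
end

section
/- Let G be a split connected reductive group over the ring of integers of a number field K whose centre Z_G is a split torus, and let G^der be its derived group with finite centre of order n. Let U ⊆ G(A_K^∞) be a compact open subgroup containing the maximal compact subgroup of Z_G(A_K^∞), and let Γ^d = G^der(K) ∩ U and Γ̄ be the corresponding congruence subgroup of G^ad(K). Then the natural map f : Γ^d → Γ̄ has kernel of order dividing a power of n, and its image is a normal subgroup of Γ̄ with abelian quotient annihilated by n. -/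
/-!
An element of `Γ̄` is the class of some `g ∈ GL_n(K)` whose adelic image is `u * z` with
`u ∈ U` and `z` central. Central factors are invisible to conjugation and commutators, so conjugates of
`Γ^d` and commutators of such `g` have determinant one and adelic image in `U`. For the `n`-th
power, `g ^ n * (det g)⁻¹` has determinant one and adelic image `u ^ n * w` with `w = c • 1`
central; then `c ^ n = det w = (det u)⁻ⁿ` lies in the compact group `det U`, so `c` lies in a
compact subgroup of the ideles and hence `w ∈ U`. The kernel of `Γ^d → Γ̄` lies in the centre
`μ_n` of `SL_n(K)`.
-/

open IsDedekindDomain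

noncomputable section

variable (K : Type) [Field K] [NumberField K] (n : ℕ)

/-- The finite adele ring `𝔸_K^∞` of a number field. -/
abbrev AdeleRg : Type := FiniteAdeleRing (NumberField.RingOfIntegers K) K

/-- The inclusion `GL_n(K) → GL_n(𝔸_K^∞)`. -/
def glInclusion : GL (Fin n) K →* GL (Fin n) (AdeleRg K) :=
  Units.map ((algebraMap K (AdeleRg K)).mapMatrix).toMonoidHom

/-- `PGL_n` of a commutative ring, as the quotient of `GL_n` by its centre. -/
abbrev PGLn (R : Type) [CommRing R] : Type :=
  GL (Fin n) R ⧸ Subgroup.center (GL (Fin n) R)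

/-- The composite `SL_n(K) → GL_n(K) → PGL_n(K)` (the map `G^der(K) → G^ad(K)`). -/
def slToPGL : Matrix.SpecialLinearGroup (Fin n) K →* PGLn n K :=
  (QuotientGroup.mk' (Subgroup.center (GL (Fin n) K))).comp
    Matrix.SpecialLinearGroup.toGL

open Subgroup
open scoped commutatorElement

section CenterPerturbation

variable {G : Type*} [Group G] {U : Subgroup G} {a b x : G}

theorem Subgroup.conj_mem_of_mem_sup_center (ha : a ∈ U ⊔ center G) (hx : x ∈ U) :
    a * x * a⁻¹ ∈ U := by
  obtain ⟨u, hu, z, hz, rfl⟩ := mem_sup_of_normal_right.mp ha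
  have hzx : z * x * z⁻¹ = x := by rw [← mem_center_iff.mp hz x, mul_inv_cancel_right]
  have : u * z * x * (u * z)⁻¹ = u * (z * x * z⁻¹) * u⁻¹ := by group
  rw [this, hzx]
  exact U.mul_mem (U.mul_mem hu hx) (U.inv_mem hu)

theorem Subgroup.commutatorElement_mem_of_mem_sup_center (ha : a ∈ U ⊔ center G)
    (hb : b ∈ U ⊔ center G) : ⁅a, b⁆ ∈ U := by
  obtain ⟨u, hu, z, hz, rfl⟩ := mem_sup_of_normal_right.mp hb
  have : ⁅a, u * z⁆ = a * u * a⁻¹ * u⁻¹ := calc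
    ⁅a, u * z⁆ = a * u * (z * a⁻¹) * z⁻¹ * u⁻¹ := by rw [commutatorElement_def]; group
    _ = a * u * (a⁻¹ * z) * z⁻¹ * u⁻¹ := by rw [mem_center_iff.mp hz a⁻¹]
    _ = a * u * a⁻¹ * u⁻¹ := by group
  rw [this]
  exact U.mul_mem (conj_mem_of_mem_sup_center ha hu) (U.inv_mem hu)

end CenterPerturbation

theorem QuotientGroup.exists_mk_eq_of_mem_comap_map {G H : Type*} [Group G] [Group H]
    {M : Subgroup G} {N : Subgroup H} [M.Normal] [N.Normal] {φ : G →* H}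
    {hφ : M ≤ N.comap φ} {U : Subgroup H} {b : G ⧸ M}
    (hb : b ∈ (U.map (QuotientGroup.mk' N)).comap (QuotientGroup.map M N φ hφ)) :
    ∃ g : G, (g : G ⧸ M) = b ∧ φ g ∈ U ⊔ N := by
  obtain ⟨g, rfl⟩ := QuotientGroup.mk_surjective b
  rw [mem_comap, QuotientGroup.map_mk, ← QuotientGroup.mk'_apply, ← mem_comap, comap_map_eq,
    QuotientGroup.ker_mk'] at hb
  exact ⟨g, rfl, hb⟩

theorem Subgroup.exists_isCompact_mem_of_pow_mem {G : Type*} [CommGroup G] [TopologicalSpace G]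
    [ContinuousMul G] {D : Subgroup G} (hD : IsCompact (D : Set G)) {c : G} {k : ℕ} (hk : k ≠ 0)
    (hc : c ^ k ∈ D) : ∃ W : Subgroup G, IsCompact (W : Set G) ∧ c ∈ W := by
  refine ⟨zpowers c ⊔ D, ?_, mem_sup_left (mem_zpowers c)⟩
  -- `D` has index at most `k` in `zpowers c ⊔ D`, with coset representatives `c ^ i`, `i < k`
  have hcover : ((zpowers c ⊔ D : Subgroup G) : Set G) =
      ⋃ i ∈ Finset.range k, (c ^ i * ·) '' (D : Set G) := by
    apply subset_antisymm
    · rintro _ hx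
      obtain ⟨_, ⟨j, rfl⟩, d, hd, rfl⟩ := mem_sup.mp hx
      have hk' : (0 : ℤ) < k := by omega
      have hj : c ^ j = c ^ (j % k).toNat * (c ^ k) ^ (j / k) := by
        rw [← zpow_natCast, Int.toNat_of_nonneg (Int.emod_nonneg j hk'.ne'), ← zpow_natCast,
          ← zpow_mul, ← zpow_add, Int.emod_add_mul_ediv]
      refine Set.mem_biUnion (x := (j % k).toNat) ?_ ⟨(c ^ k) ^ (j / k) * d, ?_, ?_⟩
      · simpa [Int.toNat_lt (Int.emod_nonneg j hk'.ne')] using Int.emod_lt_of_pos j hk'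
      · exact D.mul_mem (D.zpow_mem hc _) hd
      · show c ^ _ * _ = c ^ j * d
        rw [hj, mul_assoc]
    · simp only [Set.iUnion_subset_iff, Set.image_subset_iff]
      exact fun i _ d hd ↦ mul_mem (mem_sup_left (npow_mem_zpowers c i)) (mem_sup_right hd)
  rw [hcover]
  exact (Finset.range k).isCompact_biUnion fun i _ ↦ hD.image (continuous_const_mul _)

theorem card_rootsOfUnity_dvd (R : Type*) [CommRing R] [IsDomain R] (k : ℕ) [NeZero k] :
    Nat.card (rootsOfUnity k R) ∣ k := by
  rw [← IsCyclic.exponent_eq_card]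
  exact Monoid.exponent_dvd_of_forall_pow_eq_one fun ζ ↦
    Subtype.ext ((mem_rootsOfUnity k _).mp ζ.2)

namespace Matrix

variable {m R : Type*} [Fintype m] [DecidableEq m] [CommRing R]

theorem SpecialLinearGroup.card_center_dvd [IsDomain R] :
    Nat.card (center (SpecialLinearGroup m R)) ∣ Fintype.card m := by
  rcases isEmpty_or_nonempty m with hm | hm
  · simp
  have : NeZero (Fintype.card m) := ⟨Fintype.card_ne_zero⟩
  rw [Nat.card_congr
    (SpecialLinearGroup.center_equiv_rootsOfUnity' (Classical.arbitrary m)).toEquiv]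
  exact card_rootsOfUnity_dvd R _

theorem SpecialLinearGroup.mem_range_toGL_iff {g : GL m R} :
    g ∈ SpecialLinearGroup.toGL.range ↔ GeneralLinearGroup.det g = 1 := by
  refine ⟨?_, fun h ↦ ⟨⟨g, congrArg Units.val h⟩, Units.ext rfl⟩⟩
  rintro ⟨s, rfl⟩
  exact SpecialLinearGroup.coeToGL_det s

namespace GeneralLinearGroup

variable [TopologicalSpace R]

theorem continuous_scalar : Continuous (scalar m : Rˣ →* GL m R) :=
  Continuous.units_map _ (continuous_pi fun _ ↦ continuous_id).matrix_diagonal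

variable [IsTopologicalRing R]

theorem exists_isCompact_mem_of_mem_center_of_det_mem [Nonempty m] {D : Subgroup Rˣ}
    (hD : IsCompact (D : Set Rˣ)) {w : GL m R} (hw : w ∈ center (GL m R)) (hdet : det w ∈ D) :
    ∃ W : Subgroup (GL m R), IsCompact (W : Set (GL m R)) ∧ w ∈ W := by
  obtain ⟨c, rfl⟩ := center_eq_range_scalar (n := m) (R := R) ▸ hw
  rw [det_scalar] at hdet
  obtain ⟨W, hW, hcW⟩ := exists_isCompact_mem_of_pow_mem hD Fintype.card_ne_zero hdet
  exact ⟨W.map (scalar m), hW.image continuous_scalar, mem_map_of_mem _ hcW⟩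

theorem mem_of_mem_sup_center_of_det_eq_one {U : Subgroup (GL m R)}
    (hU : IsCompact (U : Set (GL m R)))
    (hZU : ∀ z ∈ center (GL m R),
      (∃ V : Subgroup (GL m R), IsCompact (V : Set (GL m R)) ∧ z ∈ V) → z ∈ U)
    {g : GL m R} (hg : g ∈ U ⊔ center (GL m R)) (hdet : det g = 1) : g ∈ U := by
  rcases isEmpty_or_nonempty m with hm | hm
  · exact Subsingleton.elim (1 : GL m R) g ▸ U.one_mem
  obtain ⟨u, hu, w, hw, rfl⟩ := mem_sup_of_normal_right.mp hg
  have hdetw : det w ∈ U.map det := by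
    rw [map_mul] at hdet
    exact ⟨u⁻¹, U.inv_mem hu, by rw [map_inv, eq_inv_of_mul_eq_one_right hdet]⟩
  have hDU : IsCompact ((U.map det : Subgroup Rˣ) : Set Rˣ) := by
    rw [coe_map]
    exact hU.image GeneralLinearGroup.continuous_det
  obtain ⟨W, hW, hwW⟩ := exists_isCompact_mem_of_mem_center_of_det_mem hDU hw hdetw
  exact U.mul_mem hu (hZU w hw ⟨W, hW, hwW⟩)

end GeneralLinearGroup

end Matrix

open Matrix

theorem ker_slToPGL (F : Type) [Field F] (m : ℕ) :
    (slToPGL F m).ker = center (SpecialLinearGroup (Fin m) F) := by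
  ext s
  rw [MonoidHom.mem_ker, slToPGL, MonoidHom.comp_apply, QuotientGroup.mk'_apply,
    QuotientGroup.eq_one_iff, SpecialLinearGroup.toGL_mem_center_iff]

theorem mk_mem_map_slToPGL_of_det_eq_one {U : Subgroup (GL (Fin n) (AdeleRg K))}
    {g : GL (Fin n) K} (hdet : GeneralLinearGroup.det g = 1) (hgU : glInclusion K n g ∈ U) :
    (g : PGLn n K) ∈
      (U.comap ((glInclusion K n).comp SpecialLinearGroup.toGL)).map (slToPGL K n) := by
  obtain ⟨s, rfl⟩ := SpecialLinearGroup.mem_range_toGL_iff.mpr hdet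
  exact mem_map_of_mem _ hgU

theorem det_glInclusion (g : GL (Fin n) K) :
    GeneralLinearGroup.det (glInclusion K n g) =
      Units.map (algebraMap K (AdeleRg K)) (GeneralLinearGroup.det g) :=
  GeneralLinearGroup.map_det _ g

theorem mk_pow_mem_map_slToPGL {U : Subgroup (GL (Fin n) (AdeleRg K))}
    (hU : IsCompact (U : Set (GL (Fin n) (AdeleRg K))))
    (hZU : ∀ z ∈ center (GL (Fin n) (AdeleRg K)),
      (∃ V : Subgroup (GL (Fin n) (AdeleRg K)),
        IsCompact (V : Set (GL (Fin n) (AdeleRg K))) ∧ z ∈ V) → z ∈ U)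
    {g : GL (Fin n) K} (hg : glInclusion K n g ∈ U ⊔ center (GL (Fin n) (AdeleRg K))) :
    (g : PGLn n K) ^ n ∈
      (U.comap ((glInclusion K n).comp SpecialLinearGroup.toGL)).map (slToPGL K n) := by
  set ζ := GeneralLinearGroup.scalar (Fin n) (GeneralLinearGroup.det g)⁻¹
  have hζ : ζ ∈ center (GL (Fin n) K) := by
    rw [GeneralLinearGroup.center_eq_range_scalar]
    exact ⟨_, rfl⟩
  have hdet : GeneralLinearGroup.det (g ^ n * ζ) = 1 := by
    simp [ζ, GeneralLinearGroup.det_scalar]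
  have hgζ : glInclusion K n (g ^ n * ζ) ∈ U := by
    refine GeneralLinearGroup.mem_of_mem_sup_center_of_det_eq_one hU hZU ?_
      (by rw [det_glInclusion, hdet, map_one])
    rw [map_mul, map_pow]
    exact mul_mem (pow_mem hg n)
      (mem_sup_right (GeneralLinearGroup.map_center_le (algebraMap K (AdeleRg K)) hζ))
  have := mk_mem_map_slToPGL_of_det_eq_one K n hdet hgζ
  rwa [QuotientGroup.mk_mul, QuotientGroup.mk_pow, (QuotientGroup.eq_one_iff ζ).mpr hζ,
    mul_one] at this

theorem sl_to_pgl_congruence_subgroup_comparison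
    (hcent : ∀ z ∈ Subgroup.center (GL (Fin n) K),
      glInclusion K n z ∈ Subgroup.center (GL (Fin n) (AdeleRg K)))
    (U : Subgroup (GL (Fin n) (AdeleRg K)))
    (hUcompact : IsCompact (U : Set (GL (Fin n) (AdeleRg K))))
    (hZU : ∀ z ∈ Subgroup.center (GL (Fin n) (AdeleRg K)),
      (∃ V : Subgroup (GL (Fin n) (AdeleRg K)),
        IsCompact (V : Set (GL (Fin n) (AdeleRg K))) ∧ z ∈ V) → z ∈ U) :
    letI Γd : Subgroup (Matrix.SpecialLinearGroup (Fin n) K) :=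
      Subgroup.comap ((glInclusion K n).comp Matrix.SpecialLinearGroup.toGL) U
    letI Γbar : Subgroup (PGLn n K) :=
      Subgroup.comap
        (QuotientGroup.map _ _ (glInclusion K n)
          (fun z hz => Subgroup.mem_comap.mpr (hcent z hz)))
        (Subgroup.map (QuotientGroup.mk' (Subgroup.center (GL (Fin n) (AdeleRg K)))) U)
    (∃ k : ℕ, Nat.card ↥(Γd ⊓ MonoidHom.ker (slToPGL K n)) ∣ n ^ k) ∧
    (∀ b ∈ Γbar, ∀ x ∈ Subgroup.map (slToPGL K n) Γd,
      b * x * b⁻¹ ∈ Subgroup.map (slToPGL K n) Γd) ∧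
    (∀ b₁ ∈ Γbar, ∀ b₂ ∈ Γbar,
      b₁ * b₂ * b₁⁻¹ * b₂⁻¹ ∈ Subgroup.map (slToPGL K n) Γd) ∧
    (∀ b ∈ Γbar, b ^ n ∈ Subgroup.map (slToPGL K n) Γd) := by
  refine ⟨⟨1, ?_⟩, ?_, ?_, ?_⟩
  · rw [pow_one]
    calc _ ∣ Nat.card (center (SpecialLinearGroup (Fin n) K)) :=
          card_dvd_of_le (inf_le_right.trans (ker_slToPGL K n).le)
      _ ∣ n := by simpa using SpecialLinearGroup.card_center_dvd (m := Fin n) (R := K)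
  · rintro b hb _ ⟨s, hs, rfl⟩
    obtain ⟨g, rfl, hg⟩ := QuotientGroup.exists_mk_eq_of_mem_comap_map hb
    exact mk_mem_map_slToPGL_of_det_eq_one K n (g := g * SpecialLinearGroup.toGL s * g⁻¹)
      (by simp) (by simpa using conj_mem_of_mem_sup_center hg hs)
  · intro b₁ hb₁ b₂ hb₂
    obtain ⟨g₁, rfl, hg₁⟩ := QuotientGroup.exists_mk_eq_of_mem_comap_map hb₁
    obtain ⟨g₂, rfl, hg₂⟩ := QuotientGroup.exists_mk_eq_of_mem_comap_map hb₂
    exact mk_mem_map_slToPGL_of_det_eq_one K n (g := ⁅g₁, g₂⁆)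
      (by simp [commutatorElement_def])
      (by simpa using commutatorElement_mem_of_mem_sup_center hg₁ hg₂)
  · intro b hb
    obtain ⟨g, rfl, hg⟩ := QuotientGroup.exists_mk_eq_of_mem_comap_map hb
    exact mk_pow_mem_map_slToPGL K n hUcompact hZU hg

end
end
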